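/- arXiv:1003.3989 — 2 statements merged into one kernel-verified Lean document; each statement's English description precedes it below -/
import Mathlib

section
/- Let n ≥ 1 and N ≥ 1 be integers and let λ be a real number such that λ − n/2 + k ≠ 0 for every integer k with 1 ≤ k ≤ N. For 0 ≤ j ≤ N set a_j(λ) = (−1)^j · C(n, N−j) · (n/2)_j (λ)_j / ((λ − n/2 + 1)_j · j!). Then λ·N·∑_{j=0}^{N} a_j(λ) + (λ − n + 2N)·∑_{j=0}^{N} j·a_j(λ) = 0. (This is the master relation, Theorem 2.2, verified on the round sphere S^n: up to a common factor (−1)^N 2^{−2N}, the numbers a_j(λ) equal T*_{2j}(λ)(v_{2N−2j}) for the Poincaré metric on the unit ball.) -/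
/-!
The coefficients `a_j` are hypergeometric: consecutive ones satisfy a first-order recurrence
with polynomial coefficients in `j`. With it, Gosper's method finds the antidifference
`G_j = j (j + n - N) (λ - n/2 + j) a_j`: the summand `(λN + (λ - n + 2N) j) a_j` equals
`(2/n) (G_j - G_{j+1})` for `j < N` and `(2/n) G_N` for `j = N`, so the sum telescopes
to `(2/n) G_0 = 0`.
-/

/-- Pochhammer symbol `(x)_k = x (x+1) ⋯ (x+k-1)`, with `(x)_0 = 1`. -/
noncomputable def poch (x : ℝ) : ℕ → ℝ
  | 0 => 1
  | k + 1 => poch x k * (x + k)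

open Finset

theorem poch_ne_zero {x : ℝ} {m : ℕ} (h : ∀ k < m, x + k ≠ 0) : poch x m ≠ 0 := by
  induction m with
  | zero => simp [poch]
  | succ m ih => exact mul_ne_zero (ih fun k hk => h k (by omega)) (h m m.lt_succ_self)

-- Unlike `Nat.choose_succ_right_eq`, no truncated subtraction: for `k > n` both sides vanish.
theorem Nat.cast_choose_mul_sub (n k : ℕ) :
    (n.choose k : ℝ) * (n - k) = n.choose (k + 1) * (k + 1) := by
  rcases le_or_gt k n with hk | hk
  · have h := congrArg (Nat.cast : ℕ → ℝ) (Nat.choose_succ_right_eq n k)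
    push_cast [Nat.cast_sub hk] at h
    exact h.symm
  · simp [Nat.choose_eq_zero_of_lt hk, Nat.choose_eq_zero_of_lt (hk.trans k.lt_succ_self)]

theorem sum_eq_zero_of_recurrence (ν lam : ℝ) (hν : ν ≠ 0) (N : ℕ) (a : ℕ → ℝ)
    (hrec : ∀ j < N, (j + 1) * (j + 1 + ν - N) * (lam - ν / 2 + 1 + j) * a (j + 1) =
      -((N - j) * (ν / 2 + j) * (lam + j) * a j)) :
    ∑ j ∈ range (N + 1), (lam * N + (lam - ν + 2 * N) * j) * a j = 0 := by
  set G : ℕ → ℝ := fun j => j * (j + ν - N) * (lam - ν / 2 + j) * a j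
  have hstep : ∀ j < N,
      ν / 2 * ((lam * N + (lam - ν + 2 * N) * j) * a j) = G j - G (j + 1) := by
    intro j hj
    simp only [G]
    push_cast
    linear_combination hrec j hj
  have hlast : ν / 2 * ((lam * N + (lam - ν + 2 * N) * N) * a N) = G N := by
    simp only [G]
    ring
  have htel : ν / 2 * ∑ j ∈ range (N + 1), (lam * N + (lam - ν + 2 * N) * j) * a j = 0 := by
    rw [mul_sum, sum_range_succ, sum_congr rfl fun j hj => hstep j (mem_range.mp hj),
      sum_range_sub', hlast]
    simp [G]
  simpa [hν] using htel

theorem coeff_recurrence (n N : ℕ) (lam : ℝ)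
    (hlam : ∀ k : ℕ, 1 ≤ k → k ≤ N → lam - (n : ℝ) / 2 + k ≠ 0) (a : ℕ → ℝ)
    (ha : ∀ j, j ≤ N →
      a j = (-1) ^ j * (n.choose (N - j) : ℝ) * poch ((n : ℝ) / 2) j * poch lam j /
        (poch (lam - (n : ℝ) / 2 + 1) j * (j.factorial : ℝ)))
    (j : ℕ) (hj : j < N) :
    (j + 1) * (j + 1 + n - N) * (lam - n / 2 + 1 + j) * a (j + 1) =
      -((N - j) * (n / 2 + j) * (lam + j) * a j) := by
  have hshift : ∀ k < N, lam - n / 2 + 1 + k ≠ 0 := fun k hk => by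
    have := hlam (k + 1) (by omega) hk
    push_cast at this
    rwa [add_comm (k : ℝ), ← add_assoc] at this
  have hpoch : poch (lam - n / 2 + 1) j ≠ 0 := poch_ne_zero fun k hk => hshift k (by omega)
  have hu := hshift j hj
  have hfact : (j.factorial : ℝ) ≠ 0 := by positivity
  have hchoose := Nat.cast_choose_mul_sub n (N - (j + 1))
  rw [show N - (j + 1) + 1 = N - j by omega, Nat.cast_sub hj] at hchoose
  push_cast at hchoose
  rw [ha j hj.le, ha (j + 1) hj]
  simp only [poch, Nat.factorial_succ]
  push_cast
  -- hide the Pochhammer arguments from `field_simp`, which would otherwise normalize inside them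
  generalize poch (n / 2) j = P, poch lam j = Q, (j.factorial : ℝ) = F at *
  generalize lam - n / 2 + 1 = x at *
  field_simp
  linear_combination -(-1) ^ j * P * (n + j * 2) * Q * (lam + j) * hchoose

theorem statement2_general (n N : ℕ) (hn : 1 ≤ n) (lam : ℝ)
    (hlam : ∀ k : ℕ, 1 ≤ k → k ≤ N → lam - (n : ℝ) / 2 + k ≠ 0)
    (a : ℕ → ℝ)
    (ha : ∀ j, j ≤ N →
      a j = (-1) ^ j * (n.choose (N - j) : ℝ) * poch ((n : ℝ) / 2) j * poch lam j /
        (poch (lam - (n : ℝ) / 2 + 1) j * (j.factorial : ℝ))) :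
    lam * N * ∑ j ∈ Finset.range (N + 1), a j +
      (lam - n + 2 * N) * ∑ j ∈ Finset.range (N + 1), (j : ℝ) * a j = 0 := by
  have hn0 : (n : ℝ) ≠ 0 := Nat.cast_ne_zero.mpr (by omega)
  rw [← sum_eq_zero_of_recurrence n lam hn0 N a (coeff_recurrence n N lam hlam a ha),
    mul_sum, mul_sum, ← sum_add_distrib]
  exact sum_congr rfl fun j _ => by ring

theorem statement2 (n N : ℕ) (hn : 1 ≤ n) (hN : 1 ≤ N) (lam : ℝ)
    (hlam : ∀ k : ℕ, 1 ≤ k → k ≤ N → lam - (n : ℝ) / 2 + k ≠ 0)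
    (a : ℕ → ℝ)
    (ha : ∀ j, j ≤ N →
      a j = (-1) ^ j * (n.choose (N - j) : ℝ) * poch ((n : ℝ) / 2) j * poch lam j /
        (poch (lam - (n : ℝ) / 2 + 1) j * (j.factorial : ℝ))) :
    lam * N * ∑ j ∈ Finset.range (N + 1), a j +
      (lam - n + 2 * N) * ∑ j ∈ Finset.range (N + 1), (j : ℝ) * a j = 0 :=
  statement2_general n N hn lam hlam a ha
end

section
/- Let n ≥ 1 and N ≥ 1 be integers and let λ be a real number such that λ + n/2 − 2N + k ≠ 0 for every integer k with 1 ≤ k ≤ N. Then −N! · (λ + n/2 − 2N + 1)_N · ∑_{j=0}^{N} (−1)^{N−j} C(n, N−j) · (n/2)_j (λ + n − 2N)_j / ((λ + n/2 − 2N + 1)_j · j!) = (−1)^{N−1} · (∏_{j=0}^{N−1} (n/2 − j)) · λ · ∏_{j=1}^{N−1} (λ − N − j). (This is Corollary 4.3: on the round sphere S^n the Q-curvature polynomial satisfies Q^{res}_{2N}(λ) = (−1)^{N−1} ∏_{j=0}^{N−1}(n/2 − j) · λ · ∏_{j=1}^{N−1}(λ − N − j), written out with the explicit sphere values T*_{2j}(μ)(1)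 = (n/2)_j (μ)_j / (2^{2j} j! (μ − n/2 + 1)_j) and v_{2k} = (−1)^k 2^{−2k} C(n,k).) -/
/-!
The sum is the coefficient of `x^N` in `₂F₁(a, b; c; x) (1 - x)^n` with `a = n/2`,
`b = λ + n - 2N`, `c = λ + n/2 - 2N + 1`. Since `c - a - b = 1 - n`, Euler's transformation
`₂F₁(a, b; c; x) = (1 - x)^(c - a - b) ₂F₁(c - a, c - b; c; x)` turns it into the coefficient of
`x^N` in `(1 - x) ₂F₁(c - a, c - b; c; x)`, a difference of two consecutive hypergeometric
coefficients, which factors as claimed. Euler's transformation is proved at the level of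
coefficients as the composition of two Pfaff transformations, each of which is a rearrangement
of finite sums driven by the Chu–Vandermonde identity.
-/

open Finset Polynomial
open scoped Nat

theorem neg_one_pow_mul_self {R : Type*} [Monoid R] [HasDistribNeg R] (n : ℕ) :
    (-1 : R) ^ n * (-1) ^ n = 1 := by
  rw [← pow_add, Even.neg_one_pow ⟨n, rfl⟩]

namespace Ring

variable {R : Type*} [CommRing R] [BinomialRing R]

theorem choose_neg_eq_neg_one_pow_mul (r : R) (n : ℕ) :
    choose (-r) n = (-1) ^ n * multichoose r n := by
  rw [choose_neg', Units.smul_def, zsmul_eq_mul, Int.coe_negOnePow_natCast, Int.cast_pow,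
    Int.cast_neg, Int.cast_one]

theorem multichoose_neg_natCast (n m : ℕ) :
    multichoose (-(n : R)) m = (-1) ^ m * (n.choose m : R) := by
  rw [← choose_natCast, ← neg_neg (n : R), choose_neg_eq_neg_one_pow_mul, neg_neg, ← mul_assoc,
    ← mul_pow, neg_one_mul, neg_neg, one_pow, one_mul]

theorem multichoose_add (r s : R) (m : ℕ) :
    multichoose (r + s) m = ∑ ij ∈ antidiagonal m, multichoose r ij.1 * multichoose s ij.2 := by
  have h := add_choose_eq (r := -r) (s := -s) m (Commute.all _ _)
  rw [← neg_add, choose_neg_eq_neg_one_pow_mul] at h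
  have hsign : ∀ ij ∈ antidiagonal m, choose (-r) ij.1 * choose (-s) ij.2 =
      (-1) ^ m * (multichoose r ij.1 * multichoose s ij.2) := by
    intro ij hij
    rw [← mem_antidiagonal.mp hij, choose_neg_eq_neg_one_pow_mul, choose_neg_eq_neg_one_pow_mul]
    ring
  rw [sum_congr rfl hsign, ← mul_sum] at h
  calc multichoose (r + s) m = (-1) ^ m * (-1) ^ m * multichoose (r + s) m := by
        rw [neg_one_pow_mul_self, one_mul]
    _ = _ := by rw [mul_assoc, h, ← mul_assoc, neg_one_pow_mul_self, one_mul]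

theorem multichoose_sub (r s : R) (m : ℕ) :
    multichoose (s - r) m =
      ∑ ij ∈ antidiagonal m, (-1) ^ ij.1 * multichoose r ij.1 * multichoose (s + ij.1) ij.2 := by
  rw [multichoose_eq, show s - r + m - 1 = -r + (s + m - 1) by ring,
    add_choose_eq m (Commute.all _ _)]
  refine sum_congr rfl fun ij hij => ?_
  rw [choose_neg_eq_neg_one_pow_mul, multichoose_eq (s + ij.1), ← mem_antidiagonal.mp hij]
  push_cast
  ring_nf

theorem multichoose_neg_one_add_two (m : ℕ) : multichoose (-1 : R) (m + 2) = 0 := by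
  have h := map_multichoose (Int.castRingHom R) (-1 : ℤ) (m + 2)
  rw [show (-1 : ℤ) = -((1 : ℕ) : ℤ) by simp, multichoose_neg_of_lt _ _ (by omega)] at h
  simpa using h.symm

end Ring

theorem Finset.Nat.sum_antidiagonal_sum_antidiagonal_fst {M : Type*} [AddCommMonoid M]
    (f : ℕ → ℕ → ℕ → M) (n : ℕ) :
    ∑ jm ∈ antidiagonal n, ∑ ik ∈ antidiagonal jm.1, f ik.1 ik.2 jm.2 =
      ∑ il ∈ antidiagonal n, ∑ km ∈ antidiagonal il.2, f il.1 km.1 km.2 := by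
  simp only [sum_sigma']
  refine sum_nbij' (fun x => ⟨(x.2.1, x.2.2 + x.1.2), (x.2.2, x.1.2)⟩)
    (fun x => ⟨(x.1.1 + x.2.1, x.2.2), (x.1.1, x.2.1)⟩) ?_ ?_ ?_ ?_ ?_ <;>
  · rintro ⟨⟨a, b⟩, ⟨c, d⟩⟩ h
    simp_all [mem_sigma, HasAntidiagonal.mem_antidiagonal]
    try omega

/-- Multiplication of a generating function by `1 - x`, read off on coefficients. -/
theorem sum_antidiagonal_mul_multichoose_neg_one {R : Type*} [CommRing R] [BinomialRing R]
    (g : ℕ → R) (K : ℕ) :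
    ∑ lm ∈ antidiagonal (K + 1), g lm.1 * Ring.multichoose (-1 : R) lm.2 = g (K + 1) - g K := by
  rw [sum_eq_add_of_mem (K + 1, 0) (K, 1) (by simp) (by simp) (by simp)]
  · simp [sub_eq_add_neg]
  · rintro ⟨l, m⟩ hlm ⟨h0, h1⟩
    rw [HasAntidiagonal.mem_antidiagonal] at hlm
    obtain ⟨m, rfl⟩ : ∃ m', m = m' + 2 := ⟨m - 2, by grind⟩
    rw [Ring.multichoose_neg_one_add_two, mul_zero]

theorem ascPochhammer_eval_add {S : Type*} [CommSemiring S] (x : S) (i k : ℕ) :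
    (ascPochhammer S (i + k)).eval x =
      (ascPochhammer S i).eval x * (ascPochhammer S k).eval (x + i) := by
  rw [← ascPochhammer_mul, eval_mul, eval_comp, eval_add, eval_X, eval_natCast]

theorem ascPochhammer_eval_ne_zero_of_le {S : Type*} [CommSemiring S] {c : S} {j K : ℕ}
    (hjK : j ≤ K) (hc : (ascPochhammer S K).eval c ≠ 0) : (ascPochhammer S j).eval c ≠ 0 := by
  obtain ⟨k, rfl⟩ := Nat.exists_eq_add_of_le hjK
  rw [ascPochhammer_eval_add] at hc
  exact left_ne_zero_of_mul hc

theorem prod_range_succ_sub_natCast {R : Type*} [CommRing R] (r : R) (M : ℕ) :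
    ∏ j ∈ range (M + 1), (r - j) = (-1) ^ M * r * (ascPochhammer R M).eval (1 - r) := by
  have hshift : ∏ j ∈ range M, (r - ((j + 1 : ℕ) : R)) = ∏ j ∈ range M, (r - 1 - j) :=
    prod_congr rfl fun j _ => by push_cast; ring
  rw [prod_range_succ', hshift, Nat.cast_zero, sub_zero, show (1 - r) = -(r - 1) by ring,
    ascPochhammer_eval_neg_eq_descPochhammer, descPochhammer_eval_eq_prod_range]
  linear_combination (r * ∏ j ∈ range M, (r - 1 - j)) * (neg_one_pow_mul_self (R := R) M).symm

theorem prod_Icc_one_sub_natCast {R : Type*} [CommRing R] (y : R) (M : ℕ) :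
    ∏ j ∈ Icc 1 M, (y - j) = (ascPochhammer R M).eval (y - M) := by
  rw [← Finset.Ico_add_one_right_eq_Icc, prod_Ico_eq_prod_range, Nat.add_sub_cancel,
    show y - M = (y - 1) - M + 1 by ring, ← descPochhammer_eval_eq_ascPochhammer,
    descPochhammer_eval_eq_prod_range]
  refine prod_congr rfl fun j _ => ?_
  push_cast
  ring

section Hypergeometric

variable {𝕂 : Type*} [Field 𝕂]

theorem ordinaryHypergeometricCoefficient_comm (a b c : 𝕂) (n : ℕ) :
    ordinaryHypergeometricCoefficient a b c n = ordinaryHypergeometricCoefficient b a c n := by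
  simp only [ordinaryHypergeometricCoefficient, mul_right_comm _ ((ascPochhammer 𝕂 n).eval a)]

variable [CharZero 𝕂]

theorem factorial_mul_ascPochhammer_mul_ordinaryHypergeometricCoefficient_succ_sub
    (α β c : 𝕂) (M : ℕ) (hc : (ascPochhammer 𝕂 (M + 1)).eval c ≠ 0) :
    (M + 1)! * (ascPochhammer 𝕂 (M + 1)).eval c *
        (ordinaryHypergeometricCoefficient α β c (M + 1) -
          ordinaryHypergeometricCoefficient α β c M) =
      (ascPochhammer 𝕂 M).eval α * (ascPochhammer 𝕂 M).eval β *
        ((α + M) * (β + M) - (M + 1) * (c + M)) := by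
  rw [ascPochhammer_succ_eval] at hc ⊢
  have hcM := left_ne_zero_of_mul hc
  have hc' := right_ne_zero_of_mul hc
  have hfac : (M ! : 𝕂) ≠ 0 := Nat.cast_ne_zero.mpr M.factorial_ne_zero
  have hM : (M + 1 : 𝕂) ≠ 0 := by exact_mod_cast M.succ_ne_zero
  simp only [ordinaryHypergeometricCoefficient, ascPochhammer_succ_eval, Nat.factorial_succ,
    Nat.cast_mul, Nat.cast_succ]
  field_simp

theorem ascPochhammer_eval_eq_factorial_mul_multichoose (x : 𝕂) (k : ℕ) :
    (ascPochhammer 𝕂 k).eval x = k ! * Ring.multichoose x k := by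
  rw [← nsmul_eq_mul, Ring.factorial_nsmul_multichoose_eq_ascPochhammer,
    ascPochhammer_smeval_eq_eval]

theorem multichoose_eq_ascPochhammer_eval_div (x : 𝕂) (k : ℕ) :
    Ring.multichoose x k = (ascPochhammer 𝕂 k).eval x / k ! := by
  rw [ascPochhammer_eval_eq_factorial_mul_multichoose, mul_div_cancel_left₀]
  exact_mod_cast k.factorial_ne_zero

/-- The coefficient of `x^j` in Pfaff's transformation
`₂F₁(p, q; c; x) = ∑ᵢ (-1)ⁱ [₂F₁(p, c - q; c)]ᵢ xⁱ (1 - x)^(-p-i)`. -/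
theorem ordinaryHypergeometricCoefficient_eq_sum_pfaff (p q c : 𝕂) (j : ℕ)
    (hc : (ascPochhammer 𝕂 j).eval c ≠ 0) :
    ordinaryHypergeometricCoefficient p q c j =
      ∑ ik ∈ antidiagonal j, (-1) ^ ik.1 * ordinaryHypergeometricCoefficient p (c - q) c ik.1 *
        Ring.multichoose (p + ik.1) ik.2 := by
  have hq : (ascPochhammer 𝕂 j).eval q = j ! * Ring.multichoose (c - (c - q)) j := by
    rw [sub_sub_cancel, ascPochhammer_eval_eq_factorial_mul_multichoose]
  rw [ordinaryHypergeometricCoefficient, hq, Ring.multichoose_sub]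
  simp only [mul_sum, sum_mul]
  refine sum_congr rfl fun ik hik => ?_
  obtain ⟨i, k⟩ := ik
  rw [HasAntidiagonal.mem_antidiagonal] at hik
  subst hik
  rw [ascPochhammer_eval_add] at hc ⊢
  have hci := left_ne_zero_of_mul hc
  have hck := right_ne_zero_of_mul hc
  have hfac : ((i + k)! : 𝕂) ≠ 0 := Nat.cast_ne_zero.mpr (i + k).factorial_ne_zero
  simp only [ordinaryHypergeometricCoefficient, ascPochhammer_eval_add,
    multichoose_eq_ascPochhammer_eval_div]
  field_simp

theorem sum_antidiagonal_ordinaryHypergeometricCoefficient_mul_multichoose_pfaff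
    (p q c w : 𝕂) (K : ℕ) (hc : (ascPochhammer 𝕂 K).eval c ≠ 0) :
    ∑ jm ∈ antidiagonal K, ordinaryHypergeometricCoefficient p q c jm.1 * Ring.multichoose w jm.2 =
      ∑ im ∈ antidiagonal K, (-1) ^ im.1 * ordinaryHypergeometricCoefficient p (c - q) c im.1 *
        Ring.multichoose (w + p + im.1) im.2 := by
  calc _ = ∑ jm ∈ antidiagonal K, ∑ ik ∈ antidiagonal jm.1,
        (-1) ^ ik.1 * ordinaryHypergeometricCoefficient p (c - q) c ik.1 *
          (Ring.multichoose (p + ik.1) ik.2 * Ring.multichoose w jm.2) := by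
        refine sum_congr rfl fun jm hjm => ?_
        rw [ordinaryHypergeometricCoefficient_eq_sum_pfaff p q c jm.1
          (ascPochhammer_eval_ne_zero_of_le (HasAntidiagonal.antidiagonal.fst_le hjm) hc), sum_mul]
        simp only [mul_assoc]
    _ = _ := by
        rw [Finset.Nat.sum_antidiagonal_sum_antidiagonal_fst (fun i k m => (-1) ^ i *
          ordinaryHypergeometricCoefficient p (c - q) c i *
            (Ring.multichoose (p + i) k * Ring.multichoose w m))]
        refine sum_congr rfl fun im _ => ?_
        rw [← mul_sum, ← Ring.multichoose_add, add_comm w, add_right_comm]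

/-- Euler's transformation `₂F₁(a, b; c; x) = (1 - x)^(c - a - b) ₂F₁(c - a, c - b; c; x)`,
multiplied by `(1 - x)^(-w)`, on the coefficient of `x^K`. -/
theorem sum_antidiagonal_ordinaryHypergeometricCoefficient_mul_multichoose_euler
    (a b c w : 𝕂) (K : ℕ) (hc : (ascPochhammer 𝕂 K).eval c ≠ 0) :
    ∑ jm ∈ antidiagonal K, ordinaryHypergeometricCoefficient a b c jm.1 * Ring.multichoose w jm.2 =
      ∑ lm ∈ antidiagonal K, ordinaryHypergeometricCoefficient (c - a) (c - b) c lm.1 *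
        Ring.multichoose (w + a + b - c) lm.2 := by
  have h := sum_antidiagonal_ordinaryHypergeometricCoefficient_mul_multichoose_pfaff
    (c - b) (c - a) c (w + a + b - c) K hc
  rw [sum_antidiagonal_ordinaryHypergeometricCoefficient_mul_multichoose_pfaff a b c w K hc]
  simp only [ordinaryHypergeometricCoefficient_comm (c - b), sub_sub_cancel,
    show w + a + b - c + (c - b) = w + a by ring] at h
  exact h.symm

end Hypergeometric

theorem poch_eq_ascPochhammer_eval (x : ℝ) (k : ℕ) : poch x k = (ascPochhammer ℝ k).eval x := by
  induction k with
  | zero => simp [poch]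
  | succ k ih => rw [poch, ih, ascPochhammer_succ_eval]

theorem sum_range_neg_one_pow_mul_choose_mul_poch (n N : ℕ) (a b c : ℝ) :
    ∑ j ∈ range (N + 1), (-1) ^ (N - j) * (n.choose (N - j) : ℝ) * poch a j * poch b j /
        (poch c j * (j ! : ℝ)) =
      ∑ jm ∈ antidiagonal N,
        ordinaryHypergeometricCoefficient a b c jm.1 * Ring.multichoose (-(n : ℝ)) jm.2 := by
  rw [Finset.Nat.sum_antidiagonal_eq_sum_range_succ (fun j m =>
    ordinaryHypergeometricCoefficient a b c j * Ring.multichoose (-(n : ℝ)) m)]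
  refine sum_congr rfl fun j _ => ?_
  simp only [Ring.multichoose_neg_natCast, poch_eq_ascPochhammer_eval,
    ordinaryHypergeometricCoefficient]
  ring

theorem statement6_general (n N : ℕ) (hN : 1 ≤ N) (lam : ℝ)
    (hlam : ∀ k : ℕ, 1 ≤ k → k ≤ N → lam + (n : ℝ) / 2 - 2 * N + k ≠ 0) :
    -(N.factorial : ℝ) * poch (lam + (n : ℝ) / 2 - 2 * N + 1) N *
        ∑ j ∈ Finset.range (N + 1),
          (-1) ^ (N - j) * (n.choose (N - j) : ℝ) *
            poch ((n : ℝ) / 2) j * poch (lam + n - 2 * N) j /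
              (poch (lam + (n : ℝ) / 2 - 2 * N + 1) j * (j.factorial : ℝ)) =
      (-1) ^ (N - 1) * (∏ j ∈ Finset.range N, ((n : ℝ) / 2 - j)) * lam *
        ∏ j ∈ Finset.Icc 1 (N - 1), (lam - N - j) := by
  obtain ⟨M, rfl⟩ := Nat.exists_eq_add_of_le' hN
  set c := lam + (n : ℝ) / 2 - 2 * ↑(M + 1) + 1 with hc_def
  have hc : (ascPochhammer ℝ (M + 1)).eval c ≠ 0 := by
    rw [ne_eq, ascPochhammer_eval_eq_zero_iff]
    rintro ⟨k, hk, hkc⟩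
    exact hlam (k + 1) (by omega) (by omega) (by push_cast at hc_def ⊢; linarith)
  have hα : c - (n : ℝ) / 2 = lam - ↑(M + 1) - M := by rw [hc_def]; push_cast; ring
  have hβ : c - (lam + n - 2 * ↑(M + 1)) = 1 - (n : ℝ) / 2 := by rw [hc_def]; ring
  have hsum := sum_antidiagonal_ordinaryHypergeometricCoefficient_mul_multichoose_euler
    ((n : ℝ) / 2) (lam + n - 2 * ↑(M + 1)) c (-(n : ℝ)) (M + 1) hc
  rw [show -(n : ℝ) + n / 2 + (lam + n - 2 * ↑(M + 1)) - c = -1 by ring,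
    sum_antidiagonal_mul_multichoose_neg_one, hα, hβ] at hsum
  rw [sum_range_neg_one_pow_mul_choose_mul_poch, hsum, poch_eq_ascPochhammer_eval, neg_mul, neg_mul,
    factorial_mul_ascPochhammer_mul_ordinaryHypergeometricCoefficient_succ_sub _ _ _ _ hc,
    Nat.add_sub_cancel, prod_range_succ_sub_natCast, prod_Icc_one_sub_natCast, hc_def]
  push_cast
  linear_combination (-((ascPochhammer ℝ M).eval (lam - (M + 1) - M) *
    (ascPochhammer ℝ M).eval (1 - (n : ℝ) / 2) * lam * n / 2)) * neg_one_pow_mul_self (R := ℝ) M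

theorem statement6 (n N : ℕ) (hn : 1 ≤ n) (hN : 1 ≤ N) (lam : ℝ)
    (hlam : ∀ k : ℕ, 1 ≤ k → k ≤ N → lam + (n : ℝ) / 2 - 2 * N + k ≠ 0) :
    -(N.factorial : ℝ) * poch (lam + (n : ℝ) / 2 - 2 * N + 1) N *
        ∑ j ∈ Finset.range (N + 1),
          (-1) ^ (N - j) * (n.choose (N - j) : ℝ) *
            poch ((n : ℝ) / 2) j * poch (lam + n - 2 * N) j /
              (poch (lam + (n : ℝ) / 2 - 2 * N + 1) j * (j.factorial : ℝ)) =
      (-1) ^ (N - 1) * (∏ j ∈ Finset.range N, ((n : ℝ) / 2 - j)) * lam *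
        ∏ j ∈ Finset.Icc 1 (N - 1), (lam - N - j) :=
  statement6_general n N hN lam hlam
end
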